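/- Let U ⊆ ℝ⁵ be open, let θ¹ and θ² be smooth ℂ-valued 1-forms on U, and let ψ be a smooth ℝ-valued 1-form on U, such that at every point x ∈ U the five complex covectors θ¹_x, θ²_x, conj(θ¹_x), conj(θ²_x), ψ_x are linearly independent over ℂ in Hom_ℝ(ℝ⁵, ℂ). Suppose there are smooth functions T₁, T₂ : U → ℂ with dθ¹ = −i·ψ∧θ¹ + conj(θ¹)∧θ² and dθ² = −2i·ψ∧θ² + T₁·θ¹∧conj(θ¹) + T₂·θ¹∧θ². Then there exists a smooth function T₃ : U → ℂ with Re T₃ = 0 (purely imaginary) such that dψ = i·θ²∧conj(θ²) + i·conj(T₂)·θ¹∧conj(θ²) − i·T₂·conj(θ¹)∧θ² + T₃·θ¹∧conj(θ¹). -/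

import Mathlib

/-- Pointwise complex conjugate of a ℂ-valued real-linear covector. -/
noncomputable def conjForm {E : Type*} [NormedAddCommGroup E] [NormedSpace ℝ E]
    (α : E →L[ℝ] ℂ) : E →L[ℝ] ℂ :=
  Complex.conjCLE.toContinuousLinearMap.comp α

/-- A real covector regarded as a ℂ-valued covector. -/
noncomputable def realToC {E : Type*} [NormedAddCommGroup E] [NormedSpace ℝ E]
    (φ : E →L[ℝ] ℝ) : E →L[ℝ] ℂ :=
  Complex.ofRealCLM.comp φ

/-- Exterior derivative of a ℂ-valued 1-form (alternatized Fréchet derivative). -/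
noncomputable def extD {E : Type*} [NormedAddCommGroup E] [NormedSpace ℝ E]
    (α : E → E →L[ℝ] ℂ) (x v w : E) : ℂ :=
  fderiv ℝ (fun y => α y w) x v - fderiv ℝ (fun y => α y v) x w

/-- Exterior derivative of an ℝ-valued 1-form. -/
noncomputable def extDR {E : Type*} [NormedAddCommGroup E] [NormedSpace ℝ E]
    (α : E → E →L[ℝ] ℝ) (x v w : E) : ℝ :=
  fderiv ℝ (fun y => α y w) x v - fderiv ℝ (fun y => α y v) x w

/-!
Put `γ = dψ − iθ²∧θ̄² − iT̄₂θ¹∧θ̄² + iT₂θ̄¹∧θ²`. Substituting the structure equations for `dθ¹`,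
`dθ̄¹` and `dθ²` into `d(dθ¹) = 0` leaves exactly `γ∧θ¹ = 0`; as `γ` is real, also `γ∧θ̄¹ = 0`.
Independence of `θ¹` and `θ̄¹` means that `θ¹` maps onto `ℂ`, say `θ¹(e₁) = 1` and `θ¹(e₂) = i`,
and Cartan's lemma then gives `γ = T₃ θ¹∧θ̄¹` with `T₃ = (i/2) γ(e₁, e₂)`, which is imaginary
because `γ` is real. Near any point `T₃` is the quotient `γ(v, w) / (θ¹∧θ̄¹)(v, w)` for fixed
`v, w` with nonzero denominator, hence smooth.
-/

open Complex ComplexConjugate Filter Topology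

section Forms

variable {E : Type*} [NormedAddCommGroup E] [NormedSpace ℝ E]

lemma conjForm_apply (α : E →L[ℝ] ℂ) (v : E) : conjForm α v = conj (α v) := rfl

lemma realToC_apply (φ : E →L[ℝ] ℝ) (v : E) : realToC φ v = φ v := rfl

noncomputable def wedge (α β : E →L[ℝ] ℂ) (v w : E) : ℂ := α v * β w - α w * β v

noncomputable def wedge₂₁ (γ : E → E → ℂ) (α : E →L[ℝ] ℂ) (u v w : E) : ℂ :=
  γ u v * α w + γ v w * α u + γ w u * α v

noncomputable def extD₂ (β : E → E → E → ℂ) (x u v w : E) : ℂ :=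
  fderiv ℝ (fun y => β y v w) x u + fderiv ℝ (fun y => β y w u) x v
    + fderiv ℝ (fun y => β y u v) x w

variable {F : Type*} [NormedAddCommGroup F] [NormedSpace ℝ F] {x : E}

lemma fderiv_apply_eq_fderiv {α : E → E →L[ℝ] F} (hα : DifferentiableAt ℝ α x) (v w : E) :
    fderiv ℝ (fun y => α y w) x v = fderiv ℝ α x v w := by
  simp [fderiv_clm_apply hα (differentiableAt_const w)]

lemma extD_eq_fderiv {α : E → E →L[ℝ] ℂ} (hα : DifferentiableAt ℝ α x) (v w : E) :
    extD α x v w = fderiv ℝ α x v w - fderiv ℝ α x w v := by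
  rw [extD, fderiv_apply_eq_fderiv hα, fderiv_apply_eq_fderiv hα]

lemma extDR_eq_fderiv {ψ : E → E →L[ℝ] ℝ} (hψ : DifferentiableAt ℝ ψ x) (v w : E) :
    extDR ψ x v w = fderiv ℝ ψ x v w - fderiv ℝ ψ x w v := by
  rw [extDR, fderiv_apply_eq_fderiv hψ, fderiv_apply_eq_fderiv hψ]

lemma extD_clm_comp (L : F →L[ℝ] ℂ) {α : E → E →L[ℝ] F} (hα : DifferentiableAt ℝ α x)
    (v w : E) :
    extD (fun y => L.comp (α y)) x v w =
      L (fderiv ℝ (fun y => α y w) x v - fderiv ℝ (fun y => α y v) x w) := by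
  have hL : ∀ u, fderiv ℝ (fun y => L (α y u)) x = L.comp (fderiv ℝ (fun y => α y u) x) :=
    fun u => (L.hasFDerivAt.comp x (hα.clm_apply (differentiableAt_const u)).hasFDerivAt).fderiv
  simp only [extD, ContinuousLinearMap.comp_apply, hL, map_sub]

lemma extD_conjForm {α : E → E →L[ℝ] ℂ} (hα : DifferentiableAt ℝ α x) (v w : E) :
    extD (fun y => conjForm (α y)) x v w = conj (extD α x v w) :=
  extD_clm_comp _ hα v w

lemma extD_smul_realToC (c : ℂ) {ψ : E → E →L[ℝ] ℝ} (hψ : DifferentiableAt ℝ ψ x) (v w : E) :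
    extD (fun y => c • realToC (ψ y)) x v w = c * extDR ψ x v w :=
  extD_clm_comp (c • ofRealCLM) hψ v w

lemma extD₂_congr {β β' : E → E → E → ℂ} (h : ∀ᶠ y in 𝓝 x, β y = β' y) :
    extD₂ β x = extD₂ β' x := by
  have hc : ∀ v w, fderiv ℝ (fun y => β y v w) x = fderiv ℝ (fun y => β' y v w) x :=
    fun v w => EventuallyEq.fderiv_eq (h.mono fun y hy => congrFun (congrFun hy v) w)
  ext u v w
  simp only [extD₂, hc]

lemma extD₂_add {β β' : E → E → E → ℂ} (hβ : ∀ v w, DifferentiableAt ℝ (fun y => β y v w) x)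
    (hβ' : ∀ v w, DifferentiableAt ℝ (fun y => β' y v w) x) (u v w : E) :
    extD₂ (fun y v w => β y v w + β' y v w) x u v w = extD₂ β x u v w + extD₂ β' x u v w := by
  simp only [extD₂, fderiv_fun_add (hβ _ _) (hβ' _ _), add_apply]
  ring

lemma differentiableAt_wedge_apply {α β : E → E →L[ℝ] ℂ} (hα : DifferentiableAt ℝ α x)
    (hβ : DifferentiableAt ℝ β x) (v w : E) :
    DifferentiableAt ℝ (fun y => wedge (α y) (β y) v w) x := by
  have ha := fun u => hα.clm_apply (differentiableAt_const u)
  have hb := fun u => hβ.clm_apply (differentiableAt_const u)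
  exact ((ha v).mul (hb w)).sub ((ha w).mul (hb v))

theorem extD₂_wedge {α β : E → E →L[ℝ] ℂ} (hα : DifferentiableAt ℝ α x)
    (hβ : DifferentiableAt ℝ β x) (u v w : E) :
    extD₂ (fun y => wedge (α y) (β y)) x u v w =
      wedge₂₁ (extD α x) (β x) u v w - wedge₂₁ (extD β x) (α x) u v w := by
  have ha := fun u => hα.clm_apply (differentiableAt_const u)
  have hb := fun u => hβ.clm_apply (differentiableAt_const u)
  have hw : ∀ a b, fderiv ℝ (fun y => wedge (α y) (β y) a b) x =
      (α x a • fderiv ℝ (fun y => β y b) x + β x b • fderiv ℝ (fun y => α y a) x)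
        - (α x b • fderiv ℝ (fun y => β y a) x + β x a • fderiv ℝ (fun y => α y b) x) := by
    intro a b
    have hab : DifferentiableAt ℝ (fun y => α y a * β y b) x := (ha a).mul (hb b)
    have hba : DifferentiableAt ℝ (fun y => α y b * β y a) x := (ha b).mul (hb a)
    rw [show (fun y => wedge (α y) (β y) a b) = fun y => α y a * β y b - α y b * β y a from rfl,
      fderiv_fun_sub hab hba, fderiv_fun_mul (ha a) (hb b),
      fderiv_fun_mul (ha b) (hb a)]
  simp only [extD₂, hw, wedge₂₁, extD, sub_apply, add_apply, smul_apply, smul_eq_mul]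
  ring

theorem extD₂_extD {α : E → E →L[ℝ] ℂ} (hα : ContDiffAt ℝ 2 α x) (u v w : E) :
    extD₂ (extD α) x u v w = 0 := by
  have hdiff : ∀ᶠ y in 𝓝 x, DifferentiableAt ℝ α y :=
    (hα.eventually (by simp)).mono fun y hy => hy.differentiableAt (by simp)
  have hα' : DifferentiableAt ℝ (fderiv ℝ α) x :=
    (hα.fderiv_right (m := 1) le_rfl).differentiableAt one_ne_zero
  have hsymm := hα.isSymmSndFDerivAt (by simp)
  have hD : ∀ a b c : E, fderiv ℝ (fun y => extD α y b c) x a =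
      fderiv ℝ (fderiv ℝ α) x a b c - fderiv ℝ (fderiv ℝ α) x a c b := by
    intro a b c
    have hb := fun u => hα'.clm_apply (differentiableAt_const u)
    rw [EventuallyEq.fderiv_eq (hdiff.mono fun y hy => extD_eq_fderiv hy b c),
      fderiv_fun_sub ((hb b).clm_apply (differentiableAt_const c))
        ((hb c).clm_apply (differentiableAt_const b)),
      sub_apply, fderiv_apply_eq_fderiv (hb b), fderiv_apply_eq_fderiv (hb c),
      fderiv_apply_eq_fderiv hα', fderiv_apply_eq_fderiv hα']
  rw [extD₂, hD, hD, hD, hsymm u v, hsymm v w, hsymm w u]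
  ring

end Forms

section Cartan

variable {E : Type*} [NormedAddCommGroup E] [NormedSpace ℝ E]

theorem surjective_of_linearIndependent_conjForm {α : E →L[ℝ] ℂ}
    (h : LinearIndependent ℂ ![α, conjForm α]) : Function.Surjective α := by
  by_contra hα
  have hlt : LinearMap.range (α : E →ₗ[ℝ] ℂ) < ⊤ :=
    lt_top_iff_ne_top.2 fun h' => hα (LinearMap.range_eq_top.1 h')
  obtain ⟨f, hf0, hf⟩ := Submodule.exists_le_ker_of_lt_top _ hlt
  have hfz : ∀ z : ℂ, f z = z.re * f 1 + z.im * f I := fun z => by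
    have hz := congrArg f (show z = z.re • (1 : ℂ) + z.im • I by simp)
    rwa [map_add, map_smul, map_smul, smul_eq_mul, smul_eq_mul] at hz
  have hfα : ∀ v, (f 1 - f I * I) / 2 * α v + (f 1 + f I * I) / 2 * conj (α v) = 0 := by
    intro v
    have hv : f (α v) = 0 := hf ⟨v, rfl⟩
    rw [hfz] at hv
    apply Complex.ext <;> simp <;> linarith
  obtain ⟨hs, ht⟩ := LinearIndependent.pair_iff.1 h _ _ (ContinuousLinearMap.ext hfα)
  have h1 : f 1 = 0 := by exact_mod_cast (by linear_combination hs + ht : (f 1 : ℂ) = 0)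
  have hI : f I = 0 := by
    have : (f I : ℂ) * I = 0 := by linear_combination ht - hs
    exact_mod_cast (mul_eq_zero.1 this).resolve_right I_ne_zero
  exact hf0 (LinearMap.ext fun z => by simp [hfz z, h1, hI])

lemma exists_wedge_conjForm_ne_zero {α : E →L[ℝ] ℂ} (hα : Function.Surjective α) :
    ∃ v w, wedge α (conjForm α) v w ≠ 0 := by
  obtain ⟨e₁, he₁⟩ := hα 1
  obtain ⟨e₂, he₂⟩ := hα I
  have h : wedge α (conjForm α) e₁ e₂ = -2 * I := by
    simp only [wedge, conjForm_apply, he₁, he₂, map_one, conj_I]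
    ring
  exact ⟨e₁, e₂, by simp [h]⟩

theorem exists_eq_mul_wedge_conjForm {α : E →L[ℝ] ℂ} (hα : Function.Surjective α)
    {γ : E → E → ℂ} (hanti : ∀ v w, γ w v = -γ v w) (hreal : ∀ v w, conj (γ v w) = γ v w)
    (hγ : ∀ u v w, wedge₂₁ γ α u v w = 0) :
    ∃ c : ℂ, c.re = 0 ∧ ∀ v w, γ v w = c * wedge α (conjForm α) v w := by
  obtain ⟨e₁, he₁⟩ := hα 1
  obtain ⟨e₂, he₂⟩ := hα I
  have hγ' : ∀ u v w, wedge₂₁ γ (conjForm α) u v w = 0 := fun u v w => by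
    simpa [wedge₂₁, conjForm_apply, hreal] using congrArg conj (hγ u v w)
  have h1 : ∀ v w, γ v w = γ e₁ w * α v - γ e₁ v * α w := fun v w => by
    have h := hγ e₁ v w
    rw [wedge₂₁, he₁, hanti e₁ w] at h
    linear_combination h
  have h2 : ∀ v w, γ v w = γ e₁ w * conj (α v) - γ e₁ v * conj (α w) := fun v w => by
    have h := hγ' e₁ v w
    rw [wedge₂₁, conjForm_apply, conjForm_apply, conjForm_apply, he₁, map_one, hanti e₁ w] at h
    linear_combination h
  have h3 : ∀ w, 2 * I * γ e₁ w = γ e₁ e₂ * (α w - conj (α w)) := fun w => by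
    have h := (h1 e₂ w).symm.trans (h2 e₂ w)
    rw [he₂, conj_I] at h
    linear_combination h
  refine ⟨I / 2 * γ e₁ e₂, by simp [conj_eq_iff_im.1 (hreal e₁ e₂)], fun v w => ?_⟩
  rw [wedge, conjForm_apply, conjForm_apply]
  linear_combination h1 v w - I * α v / 2 * h3 w + I * α w / 2 * h3 v
    + (γ e₁ w * α v - γ e₁ v * α w) * I_sq

end Cartan

section StructureEquations

variable {E : Type*} [NormedAddCommGroup E] [NormedSpace ℝ E]

noncomputable def dψRemainder (θ1 θ2 : E → E →L[ℝ] ℂ) (ψ : E → E →L[ℝ] ℝ) (T2 : E → ℂ)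
    (x v w : E) : ℂ :=
  extDR ψ x v w - I * wedge (θ2 x) (conjForm (θ2 x)) v w
    - I * conj (T2 x) * wedge (θ1 x) (conjForm (θ2 x)) v w
    + I * T2 x * wedge (conjForm (θ1 x)) (θ2 x) v w

variable {θ1 θ2 : E → E →L[ℝ] ℂ} {ψ : E → E →L[ℝ] ℝ} {T1 T2 : E → ℂ} {x : E}

lemma dψRemainder_swap (v w : E) :
    dψRemainder θ1 θ2 ψ T2 x w v = -dψRemainder θ1 θ2 ψ T2 x v w := by
  simp only [dψRemainder, extDR, wedge]
  push_cast
  ring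

lemma conj_dψRemainder (v w : E) :
    conj (dψRemainder θ1 θ2 ψ T2 x v w) = dψRemainder θ1 θ2 ψ T2 x v w := by
  simp only [dψRemainder, wedge, conjForm_apply, map_add, map_sub, map_mul, conj_I, conj_conj,
    conj_ofReal]
  ring

theorem wedge₂₁_dψRemainder_eq_zero (hθ1 : ContDiffAt ℝ 2 θ1 x)
    (hθ2 : DifferentiableAt ℝ θ2 x) (hψ : DifferentiableAt ℝ ψ x)
    (heq1 : ∀ᶠ y in 𝓝 x, ∀ v w, extD θ1 y v w =
      -I * wedge (realToC (ψ y)) (θ1 y) v w + wedge (conjForm (θ1 y)) (θ2 y) v w)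
    (heq2 : ∀ v w, extD θ2 x v w = -2 * I * wedge (realToC (ψ x)) (θ2 x) v w
      + T1 x * wedge (θ1 x) (conjForm (θ1 x)) v w + T2 x * wedge (θ1 x) (θ2 x) v w)
    (u v w : E) :
    wedge₂₁ (dψRemainder θ1 θ2 ψ T2 x) (θ1 x) u v w = 0 := by
  have hθ1' : DifferentiableAt ℝ θ1 x := hθ1.differentiableAt two_ne_zero
  have hψc : DifferentiableAt ℝ (fun y => -I • realToC (ψ y)) x :=
    ((differentiableAt_const _).clm_comp hψ).fun_const_smul _
  have hθ1c : DifferentiableAt ℝ (fun y => conjForm (θ1 y)) x :=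
    (differentiableAt_const _).clm_comp hθ1'
  have hd1 : ∀ᶠ y in 𝓝 x, extD θ1 y = fun v w =>
      wedge (-I • realToC (ψ y)) (θ1 y) v w + wedge (conjForm (θ1 y)) (θ2 y) v w :=
    heq1.mono fun y hy => by
      ext v w
      rw [hy]
      simp only [wedge, smul_apply, smul_eq_mul]
      ring
  have hdd := extD₂_extD hθ1 u v w
  rw [extD₂_congr hd1, extD₂_add (differentiableAt_wedge_apply hψc hθ1')
    (differentiableAt_wedge_apply hθ1c hθ2), extD₂_wedge hψc hθ1', extD₂_wedge hθ1c hθ2] at hdd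
  simp only [wedge₂₁, extD_smul_realToC _ hψ, extD_conjForm hθ1', heq1.self_of_nhds, heq2] at hdd
  simp only [wedge₂₁, dψRemainder, wedge, realToC_apply, conjForm_apply, map_add, map_sub,
    map_mul, map_neg, conj_I, conj_conj, conj_ofReal, smul_apply, smul_eq_mul] at hdd ⊢
  -- `hdd` now reads `-i (γ∧θ¹)(u, v, w) = 0`
  linear_combination (norm := ring_nf) I * hdd
  simp only [I_sq]
  ring

end StructureEquations

section Smoothness

variable {E : Type*} [NormedAddCommGroup E] [NormedSpace ℝ E] {U : Set E} {n : WithTop ℕ∞}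

theorem contDiffOn_of_locally_mul_eq (hU : IsOpen U) {f : E → ℂ}
    (h : ∀ x₀ ∈ U, ∃ g k : E → ℂ, ContDiffOn ℝ n g U ∧ ContDiffOn ℝ n k U ∧ k x₀ ≠ 0 ∧
      ∀ x ∈ U, g x = f x * k x) :
    ContDiffOn ℝ n f U := by
  intro x₀ hx₀
  obtain ⟨g, k, hg, hk, hk₀, hgk⟩ := h x₀ hx₀
  have hU₀ := hU.mem_nhds hx₀
  have hne : ∀ᶠ x in 𝓝 x₀, x ∈ U ∧ k x ≠ 0 :=
    Filter.inter_mem hU₀ ((hk.continuousOn.continuousAt hU₀).eventually_ne hk₀)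
  have hq : ContDiffAt ℝ n (fun x => g x * (k x)⁻¹) x₀ :=
    (hg.contDiffAt hU₀).mul ((hk.contDiffAt hU₀).inv hk₀)
  refine (hq.congr_of_eventuallyEq (hne.mono fun x hx => ?_)).contDiffWithinAt
  simp only [hgk x hx.1, mul_inv_cancel_right₀ hx.2]

lemma ContDiffOn.conjForm {θ : E → E →L[ℝ] ℂ} (hθ : ContDiffOn ℝ n θ U) :
    ContDiffOn ℝ n (fun x => conjForm (θ x)) U :=
  contDiffOn_const.clm_comp hθ

lemma ContDiffOn.wedge_apply {θ η : E → E →L[ℝ] ℂ} (hθ : ContDiffOn ℝ n θ U)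
    (hη : ContDiffOn ℝ n η U) (v w : E) :
    ContDiffOn ℝ n (fun x => wedge (θ x) (η x) v w) U := by
  have hθ' := fun u => hθ.clm_apply (contDiffOn_const (c := u))
  have hη' := fun u => hη.clm_apply (contDiffOn_const (c := u))
  exact ((hθ' v).mul (hη' w)).sub ((hθ' w).mul (hη' v))

lemma ContDiffOn.extDR_apply (hU : IsOpen U) {ψ : E → E →L[ℝ] ℝ} (hψ : ContDiffOn ℝ (n + 1) ψ U)
    (v w : E) :
    ContDiffOn ℝ n (fun x => extDR ψ x v w) U := by
  have hdψ := hψ.fderiv_of_isOpen hU le_rfl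
  have hD := fun a b => (hdψ.clm_apply (contDiffOn_const (c := a))).clm_apply
    (contDiffOn_const (c := b))
  refine ((hD v w).sub (hD w v)).congr fun x hx => extDR_eq_fderiv ?_ v w
  exact (hψ.differentiableOn (by simp) x hx).differentiableAt (hU.mem_nhds hx)

lemma ContDiffOn.dψRemainder_apply (hU : IsOpen U) {θ1 θ2 : E → E →L[ℝ] ℂ}
    {ψ : E → E →L[ℝ] ℝ} {T2 : E → ℂ} (hθ1 : ContDiffOn ℝ n θ1 U) (hθ2 : ContDiffOn ℝ n θ2 U)
    (hψ : ContDiffOn ℝ (n + 1) ψ U) (hT2 : ContDiffOn ℝ n T2 U) (v w : E) :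
    ContDiffOn ℝ n (fun x => dψRemainder θ1 θ2 ψ T2 x v w) U := by
  have hT2c : ContDiffOn ℝ n (fun x => conj (T2 x)) U := conjCLE.contDiff.comp_contDiffOn hT2
  exact (((ofRealCLM.contDiff.comp_contDiffOn (hψ.extDR_apply hU v w)).sub
    (contDiffOn_const.mul (hθ2.wedge_apply hθ2.conjForm v w))).sub
    ((contDiffOn_const.mul hT2c).mul (hθ1.wedge_apply hθ2.conjForm v w))).add
    ((contDiffOn_const.mul hT2).mul (hθ1.conjForm.wedge_apply hθ2 v w))

end Smoothness

theorem stmt13 (U : Set (Fin 5 → ℝ)) (hU : IsOpen U)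
    (θ1 θ2 : (Fin 5 → ℝ) → (Fin 5 → ℝ) →L[ℝ] ℂ)
    (ψ : (Fin 5 → ℝ) → (Fin 5 → ℝ) →L[ℝ] ℝ)
    (hθ1 : ContDiffOn ℝ (⊤ : ℕ∞) θ1 U) (hθ2 : ContDiffOn ℝ (⊤ : ℕ∞) θ2 U)
    (hψ : ContDiffOn ℝ (⊤ : ℕ∞) ψ U)
    (hindep : ∀ x ∈ U, LinearIndependent ℂ
      ![θ1 x, θ2 x, conjForm (θ1 x), conjForm (θ2 x), realToC (ψ x)])
    (T1 T2 : (Fin 5 → ℝ) → ℂ)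
    (hT2 : ContDiffOn ℝ (⊤ : ℕ∞) T2 U)
    (heq1 : ∀ x ∈ U, ∀ v w, extD θ1 x v w =
      -Complex.I * (((ψ x v : ℝ) : ℂ) * θ1 x w - ((ψ x w : ℝ) : ℂ) * θ1 x v)
      + ((starRingEnd ℂ) (θ1 x v) * θ2 x w - (starRingEnd ℂ) (θ1 x w) * θ2 x v))
    (heq2 : ∀ x ∈ U, ∀ v w, extD θ2 x v w =
      -2 * Complex.I * (((ψ x v : ℝ) : ℂ) * θ2 x w - ((ψ x w : ℝ) : ℂ) * θ2 x v)
      + T1 x * (θ1 x v * (starRingEnd ℂ) (θ1 x w) - θ1 x w * (starRingEnd ℂ) (θ1 x v))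
      + T2 x * (θ1 x v * θ2 x w - θ1 x w * θ2 x v)) :
    ∃ T3 : (Fin 5 → ℝ) → ℂ,
      ContDiffOn ℝ (⊤ : ℕ∞) T3 U ∧ (∀ x ∈ U, (T3 x).re = 0) ∧
      ∀ x ∈ U, ∀ v w, ((extDR ψ x v w : ℝ) : ℂ) =
        Complex.I * (θ2 x v * (starRingEnd ℂ) (θ2 x w) - θ2 x w * (starRingEnd ℂ) (θ2 x v))
        + Complex.I * (starRingEnd ℂ) (T2 x) *
            (θ1 x v * (starRingEnd ℂ) (θ2 x w) - θ1 x w * (starRingEnd ℂ) (θ2 x v))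
        - Complex.I * T2 x *
            ((starRingEnd ℂ) (θ1 x v) * θ2 x w - (starRingEnd ℂ) (θ1 x w) * θ2 x v)
        + T3 x * (θ1 x v * (starRingEnd ℂ) (θ1 x w) - θ1 x w * (starRingEnd ℂ) (θ1 x v)) := by
  have hsurj : ∀ x ∈ U, Function.Surjective (θ1 x) := fun x hx =>
    surjective_of_linearIndependent_conjForm <| by
      convert (hindep x hx).comp ![0, 2] (by decide) using 1
      ext i
      fin_cases i <;> rfl
  have hcoef : ∀ x ∈ U, ∃ c : ℂ, c.re = 0 ∧
      ∀ v w, dψRemainder θ1 θ2 ψ T2 x v w = c * wedge (θ1 x) (conjForm (θ1 x)) v w := by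
    intro x hx
    have hUx := hU.mem_nhds hx
    exact exists_eq_mul_wedge_conjForm (hsurj x hx) dψRemainder_swap conj_dψRemainder
      (wedge₂₁_dψRemainder_eq_zero
        ((hθ1.contDiffAt hUx).of_le (WithTop.coe_le_coe.2 le_top))
        ((hθ2.contDiffAt hUx).differentiableAt (by simp))
        ((hψ.contDiffAt hUx).differentiableAt (by simp))
        (eventually_of_mem hUx heq1) (heq2 x hx))
  choose! T3 hT3re hT3 using hcoef
  refine ⟨T3, contDiffOn_of_locally_mul_eq hU fun x₀ hx₀ => ?_, hT3re, fun x hx v w => ?_⟩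
  · obtain ⟨v, w, hvw⟩ := exists_wedge_conjForm_ne_zero (hsurj x₀ hx₀)
    exact ⟨_, _, hθ1.dψRemainder_apply hU hθ2 hψ hT2 v w, hθ1.wedge_apply hθ1.conjForm v w, hvw,
      fun x hx => hT3 x hx v w⟩
  · linear_combination (by simpa [dψRemainder, wedge, conjForm_apply] using hT3 x hx v w : _ = _)
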